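/- arXiv:2403.11816 — 2 statements merged into one kernel-verified Lean document; each statement's English description precedes it below -/
import Mathlib

section
/- Let R be a forward simulation relation from (X, U, W, f, β, τ) to the discrete system 𝒜 = (𝒳, 𝒰, δ), and let 𝒳_a ⊆ 𝒳 be an abstraction of the avoid set X_a ⊆ X, i.e., for every x ∈ X_a the set { s ∈ 𝒳 : (x, s) ∈ R } is non-empty and is a subset of 𝒳_a. Fix an execution σ of 𝒜 of length l ≥ 1. If there is no index i ∈ [l + 1] and no j ∈ [z_i] such that s_{i,j} ∈ 𝒳_a, then for every trajectory ξ(x, u, w; ·) of the control system of duration l·τ represented by σ, there is no t ∈ [0, l·τ] such that ξ(x, u, w; t) ∈ X_a. -/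
open MeasureTheory Set

/-- A non-deterministic discrete system `𝒜 = (𝒳, 𝒰, δ)`, with state symbols `S`, control
symbols `A`, and non-deterministic transition map `δ : 𝒳 × 𝒰 → 2^{2^𝒳 × 𝒳}`.  Each pair
`(V, s') ∈ δ(s, a)` consists of the set `V` of states that may be visited during the
transition and the state `s'` reached at the end of the transition. -/
structure DiscreteSystem (S A : Type*) where
  δ : S → A → Set (Set S × S)

/-- An execution `σ = ⟨({s₀}, s₀, a₀), …, ({s_{l,j}}_{j∈[z_l]}, s_l, ⊥)⟩` of a discrete
system: `len` is its length `l`, `state i` is `s_i`, `act i` is `a_i`, and `visited i` is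
the (finite, via `Fintype S`) set `{s_{i,j}}_{j∈[z_i]}` of states possibly visited during
the `i`-th step (with `visited 0 = {s₀}`). -/
structure Execution {S A : Type*} (M : DiscreteSystem S A) where
  len : ℕ
  state : ℕ → S
  act : ℕ → A
  visited : ℕ → Set S
  visited_zero : visited 0 = {state 0}
  mem_visited : ∀ i, i ≤ len → state i ∈ visited i
  step : ∀ i, i < len → (visited (i + 1), state (i + 1)) ∈ M.δ (state i) (act i)

/-- `R ⊆ X × 𝒳` is a forward simulation relation (FSR) from `(X, U, W, f, β, τ)` — whose
trajectories are given by the map `ξ` — to the discrete system `M`. -/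
def IsFSR {nx nu nw : ℕ} {S A : Type*} (M : DiscreteSystem S A)
    (X : Set (Fin nx → ℝ)) (W : Set (Fin nw → ℝ))
    (ξ : (Fin nx → ℝ) → (ℝ → Fin nu → ℝ) → (ℝ → Fin nw → ℝ) → ℝ → (Fin nx → ℝ))
    (β : A → (Fin nu → ℝ)) (τ : ℝ)
    (R : (Fin nx → ℝ) → S → Prop) : Prop :=
  -- `R ⊆ X × 𝒳`:
  (∀ x s, R x s → x ∈ X) ∧
  -- (1) every `x ∈ X` is related to some `s ∈ 𝒳`:
  (∀ x ∈ X, ∃ s, R x s) ∧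
  -- (2) one-step simulation:
  (∀ x ∈ X, ∀ s, R x s → ∀ a₀ : A, ∀ tₑ ∈ Icc (0 : ℝ) τ,
    ∀ w : ℝ → Fin nw → ℝ, Measurable w → (∀ t, w t ∈ W) →
      ∃ V : Set S, ∃ s₁ : S, (V, s₁) ∈ M.δ s a₀ ∧ s₁ ∈ V ∧
        (∀ t ∈ Icc (0 : ℝ) tₑ, ∃ s' ∈ V, R (ξ x (fun _ => β a₀) w t) s') ∧
        (tₑ = τ → R (ξ x (fun _ => β a₀) w τ) s₁))

/-- `u ∈ 𝒰_c`: `u` is a left-piecewise-constant signal that switches only at multiples of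
`τ` and takes values in `β(𝒰)`. -/
def PWConstant {nu : ℕ} {A : Type*} (β : A → (Fin nu → ℝ)) (τ : ℝ)
    (u : ℝ → Fin nu → ℝ) : Prop :=
  ∀ n : ℕ, ∃ a : A, ∀ t ∈ Ico ((n : ℝ) * τ) (((n : ℝ) + 1) * τ), u t = β a

/-- The execution `σ` of `M` represents the trajectory `ξ(x, u, w; ·)` over `[0, T]`
(w.r.t. the relation `R`, the map `β`, and the sampling period `τ`): `β(a_i) = u(iτ)`,
`(ξ(x,u,w;iτ), s_i) ∈ R` for all `i`, and for every `t ∈ [iτ, min{(i+1)τ, T}]` some visited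
state `s_{i+1,j}` satisfies `(ξ(x,u,w;t), s_{i+1,j}) ∈ R`. -/
def Represents {nx nu nw : ℕ} {S A : Type*} {M : DiscreteSystem S A}
    (ξ : (Fin nx → ℝ) → (ℝ → Fin nu → ℝ) → (ℝ → Fin nw → ℝ) → ℝ → (Fin nx → ℝ))
    (β : A → (Fin nu → ℝ)) (τ : ℝ)
    (R : (Fin nx → ℝ) → S → Prop) (σ : Execution M)
    (x : Fin nx → ℝ) (u : ℝ → Fin nu → ℝ) (w : ℝ → Fin nw → ℝ) (T : ℝ) : Prop :=
  (∀ i, i < σ.len → β (σ.act i) = u ((i : ℝ) * τ)) ∧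
  (∀ i, i ≤ σ.len → (i : ℝ) * τ ≤ T → R (ξ x u w ((i : ℝ) * τ)) (σ.state i)) ∧
  (∀ i, i < σ.len → ∀ t ∈ Icc ((i : ℝ) * τ) (min (((i : ℝ) + 1) * τ) T),
    ∃ s' ∈ σ.visited (i + 1), R (ξ x u w t) s')

/-- avoid-specification correspondence, discrete to continuous: if `R` is a
FSR, `𝒳_a` abstracts the avoid set `X_a`, and `σ` is an execution of length `l ≥ 1` none of
whose visited states (indices `i ∈ [l+1]`) lies in `𝒳_a`, then every trajectory
`ξ(x,u,w;·)` of duration `l·τ` represented by `σ` never enters `X_a` on `[0, l·τ]`. -/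
theorem statement9 {nx nu nw : ℕ} {S A : Type*} [Fintype S] [Fintype A]
    (M : DiscreteSystem S A)
    (X : Set (Fin nx → ℝ))
    (U : Set (Fin nu → ℝ)) (hU : IsCompact U)
    (W : Set (Fin nw → ℝ)) (hW : IsCompact W)
    (ξ : (Fin nx → ℝ) → (ℝ → Fin nu → ℝ) → (ℝ → Fin nw → ℝ) → ℝ → (Fin nx → ℝ))
    (hξ0 : ∀ x₀ u w, ξ x₀ u w 0 = x₀)
    (β : A → (Fin nu → ℝ)) (hβinj : Function.Injective β) (hβU : ∀ a, β a ∈ U)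
    (τ : ℝ) (hτ : 0 < τ)
    (R : (Fin nx → ℝ) → S → Prop)
    (hFSR : IsFSR M X W ξ β τ R)
    -- `𝒳_a` is an abstraction of the avoid set `X_a ⊆ X`:
    (Xa : Set (Fin nx → ℝ)) (hXaX : Xa ⊆ X) (𝒳a : Set S)
    (h𝒳a : ∀ x ∈ Xa, (∃ s, R x s) ∧ (∀ s, R x s → s ∈ 𝒳a))
    -- an execution of length `l ≥ 1` that never visits `𝒳_a`:
    (σ : Execution M) (hlen : 1 ≤ σ.len)
    (havoid : ∀ i, i ≤ σ.len → ∀ s' ∈ σ.visited i, s' ∉ 𝒳a) :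
    -- every trajectory of duration `l·τ` represented by `σ` avoids `X_a`:
    ∀ x ∈ X, ∀ u : ℝ → Fin nu → ℝ, PWConstant β τ u →
      ∀ w : ℝ → Fin nw → ℝ, Measurable w → (∀ t, w t ∈ W) →
      Represents ξ β τ R σ x u w ((σ.len : ℝ) * τ) →
      ∀ t ∈ Icc (0 : ℝ) ((σ.len : ℝ) * τ), ξ x u w t ∉ Xa := by
  intro x hx u hu w hw hwW hrep t ht hmem
  obtain ⟨h1, h2, h3⟩ := hrep
  obtain ⟨ht0, htl⟩ := ht
  set n : ℕ := ⌊t / τ⌋.toNat with hn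
  set i : ℕ := min n (σ.len - 1) with hi
  have hil : i < σ.len := lt_of_le_of_lt (min_le_right _ _) (Nat.sub_lt hlen one_pos)
  have hfl : 0 ≤ ⌊t / τ⌋ := Int.floor_nonneg.mpr (div_nonneg ht0 hτ.le)
  have hncast : (n : ℝ) = (⌊t / τ⌋ : ℝ) := by
    rw [hn]; exact_mod_cast Int.toNat_of_nonneg hfl
  have hfloor : (n : ℝ) ≤ t / τ := by rw [hncast]; exact Int.floor_le _
  have hlow : (i : ℝ) * τ ≤ t := by
    have h1' : (i : ℝ) ≤ (n : ℝ) := by exact_mod_cast min_le_left n (σ.len - 1)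
    have h2' : (n : ℝ) * τ ≤ t := (le_div_iff₀ hτ).mp hfloor
    nlinarith
  have hup : t ≤ min (((i : ℝ) + 1) * τ) ((σ.len : ℝ) * τ) := by
    rcases le_or_gt n (σ.len - 1) with hc | hc
    · have hie : i = n := min_eq_left hc
      have : t / τ < (n : ℝ) + 1 := by rw [hncast]; exact Int.lt_floor_add_one _
      have ht' : t < ((n : ℝ) + 1) * τ := by
        rw [← div_lt_iff₀ hτ] at *; linarith
      rw [hie]
      exact le_min ht'.le htl
    · have hie : i = σ.len - 1 := min_eq_right hc.le
      have hcast : (i : ℝ) + 1 = (σ.len : ℝ) := by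
        rw [hie]
        have : σ.len - 1 + 1 = σ.len := Nat.succ_pred_eq_of_pos hlen
        exact_mod_cast congrArg (Nat.cast : ℕ → ℝ) this
      rw [hcast]
      simpa using htl
  obtain ⟨s', hs', hR⟩ := h3 i hil t ⟨hlow, hup⟩
  exact havoid (i + 1) (Nat.succ_le_of_lt hil) s' hs' ((h𝒳a _ hmem).2 s' hR)
end

section
/- Let η : [0, T] → ℝ³ be absolutely continuous and satisfy the ship kinematics η'(t) = R(θ(t))·ν(t) + v_c(t) for almost every t ∈ [0, T], where η(t) = (N(t), E(t), θ(t)). Fix η_α = (N_α, E_α, θ_α) ∈ ℝ³ and set R_α := R(θ_α). Then the transformed curve η̃(t) := R_αᵀ(η(t) − η_α) satisfies the same ship kinematics with the same control ν(t) and the rotated disturbance R_αᵀ v_c(t): η̃'(t) = R(θ̃(t))·ν(t) + R_αᵀ v_c(t) for almost every t ∈ [0, T], where θ̃(t) is the third component of η̃(t), namely θ(t) − θ_α. -/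
open Matrix MeasureTheory Set

/-- The rotation matrix `R(θ)` with rows `(cos θ, −sin θ, 0)`, `(sin θ, cos θ, 0)`,
`(0, 0, 1)`. -/
noncomputable def shipR (θ : ℝ) : Matrix (Fin 3) (Fin 3) ℝ :=
  !![Real.cos θ, -Real.sin θ, 0;
     Real.sin θ, Real.cos θ, 0;
     0, 0, 1]

/-- The ship kinematics vector field `f(η, ν, v_c) = R(θ)·ν + v_c`, where `η = (N, E, θ)`. -/
noncomputable def shipf (η ν vc : Fin 3 → ℝ) : Fin 3 → ℝ :=
  (shipR (η 2)).mulVec ν + vc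

lemma shipR_transpose (a : ℝ) : (shipR a)ᵀ = shipR (-a) := by
  ext i j
  fin_cases i <;> fin_cases j <;> simp [shipR, Matrix.transpose_apply]

lemma shipR_mul (a b : ℝ) : shipR a * shipR b = shipR (a + b) := by
  ext i j
  fin_cases i <;> fin_cases j <;>
    simp [shipR, Matrix.mul_apply, Fin.sum_univ_three, Real.cos_add, Real.sin_add] <;> ring

lemma shipR_zero : shipR 0 = 1 := by
  rw [Matrix.one_fin_three]
  ext i j
  fin_cases i <;> fin_cases j <;> simp [shipR]

lemma shipR_mulVec_two (a : ℝ) (v : Fin 3 → ℝ) :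
    ((shipR a).mulVec v) 2 = v 2 := by
  simp [shipR, Matrix.mulVec, dotProduct, Fin.sum_univ_three]

lemma shipR_key (ηα x ν vc : Fin 3 → ℝ) :
    (shipR (ηα 2))ᵀ.mulVec (shipf x ν vc) =
      shipf ((shipR (ηα 2))ᵀ.mulVec (x - ηα)) ν ((shipR (ηα 2))ᵀ.mulVec vc) := by
  simp only [shipf, Matrix.mulVec_add, Pi.sub_apply,
    Matrix.mulVec_mulVec, shipR_transpose, shipR_mul, shipR_mulVec_two]
  conv_rhs => rw [show x 2 - ηα 2 = -ηα 2 + x 2 by ring]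

lemma shipR_mulVec_transpose_mulVec (a : ℝ) (v : Fin 3 → ℝ) :
    (shipR a).mulVec ((shipR a)ᵀ.mulVec v) = v := by
  rw [Matrix.mulVec_mulVec, shipR_transpose, shipR_mul]
  simp [shipR_zero]

/-- if `η : [0,T] → ℝ³` is absolutely continuous and satisfies the ship
kinematics `η'(t) = R(θ(t))·ν(t) + v_c(t)` for a.e. `t ∈ [0,T]` (absolute continuity
encoded in the equivalent Carathéodory integral form), then for any
`η_α = (N_α, E_α, θ_α)` with `R_α = R(θ_α)`, the transformed curve
`η̃(t) = R_αᵀ(η(t) − η_α)` satisfies the same ship kinematics with the same control `ν(t)`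
and the rotated disturbance `R_αᵀ v_c(t)`:
`η̃'(t) = R(θ̃(t))·ν(t) + R_αᵀ v_c(t)` for a.e. `t ∈ [0,T]`, where `θ̃(t)` is the third
component of `η̃(t)`. -/
theorem statement13 (T : ℝ) (hT : 0 ≤ T)
    (η : ℝ → Fin 3 → ℝ) (ν vc : ℝ → Fin 3 → ℝ)
    -- `η` is absolutely continuous on `[0,T]` …
    (hAC : ∀ t ∈ Icc (0 : ℝ) T, η t = η 0 + ∫ s in (0 : ℝ)..t, shipf (η s) (ν s) (vc s))
    -- … and satisfies the ship kinematics a.e. on `[0,T]`: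
    (hode : ∀ᵐ t ∂(volume.restrict (Icc (0 : ℝ) T)),
      HasDerivAt η (shipf (η t) (ν t) (vc t)) t)
    (ηα : Fin 3 → ℝ) :
    -- the transformed curve `η̃(t) = R_αᵀ(η(t) − η_α)` is absolutely continuous on `[0,T]` …
    (∀ t ∈ Icc (0 : ℝ) T,
      (shipR (ηα 2))ᵀ.mulVec (η t - ηα) = (shipR (ηα 2))ᵀ.mulVec (η 0 - ηα) +
        ∫ s in (0 : ℝ)..t,
          shipf ((shipR (ηα 2))ᵀ.mulVec (η s - ηα)) (ν s) ((shipR (ηα 2))ᵀ.mulVec (vc s))) ∧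
    -- … and satisfies the same ship kinematics with control `ν` and disturbance
    -- `R_αᵀ v_c` a.e. on `[0,T]`:
    (∀ᵐ t ∂(volume.restrict (Icc (0 : ℝ) T)),
      HasDerivAt (fun s => (shipR (ηα 2))ᵀ.mulVec (η s - ηα))
        (shipf ((shipR (ηα 2))ᵀ.mulVec (η t - ηα)) (ν t) ((shipR (ηα 2))ᵀ.mulVec (vc t)))
        t) := by
  set M : Matrix (Fin 3) (Fin 3) ℝ := (shipR (ηα 2))ᵀ with hM
  -- the continuous linear map `v ↦ M·v`
  set L : (Fin 3 → ℝ) →L[ℝ] (Fin 3 → ℝ) :=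
    LinearMap.toContinuousLinearMap (Matrix.mulVecLin M) with hL
  have hLapp : ∀ v, L v = M.mulVec v := fun v => rfl
  refine ⟨?_, ?_⟩
  · intro t ht
    have h0 : η t = η 0 + ∫ s in (0 : ℝ)..t, shipf (η s) (ν s) (vc s) := hAC t ht
    have hmain : M.mulVec (∫ s in (0 : ℝ)..t, shipf (η s) (ν s) (vc s)) =
        ∫ s in (0 : ℝ)..t,
          shipf ((shipR (ηα 2))ᵀ.mulVec (η s - ηα)) (ν s) ((shipR (ηα 2))ᵀ.mulVec (vc s)) := by
      by_cases hint : IntervalIntegrable (fun s => shipf (η s) (ν s) (vc s)) volume 0 t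
      · rw [show M.mulVec (∫ s in (0 : ℝ)..t, shipf (η s) (ν s) (vc s)) =
            L (∫ s in (0 : ℝ)..t, shipf (η s) (ν s) (vc s)) from rfl,
          ← ContinuousLinearMap.intervalIntegral_comp_comm L hint]
        refine intervalIntegral.integral_congr fun s _ => ?_
        rw [hLapp, hM, shipR_key]
      · have hint' : ¬ IntervalIntegrable
            (fun s => shipf ((shipR (ηα 2))ᵀ.mulVec (η s - ηα)) (ν s)
              ((shipR (ηα 2))ᵀ.mulVec (vc s))) volume 0 t := by
          intro hi
          apply hint
          set L' : (Fin 3 → ℝ) →L[ℝ] (Fin 3 → ℝ) :=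
            LinearMap.toContinuousLinearMap (Matrix.mulVecLin (shipR (ηα 2)))
          have : IntervalIntegrable
              (fun s => L' (shipf ((shipR (ηα 2))ᵀ.mulVec (η s - ηα)) (ν s)
                ((shipR (ηα 2))ᵀ.mulVec (vc s)))) volume 0 t :=
            ⟨L'.integrable_comp hi.1, L'.integrable_comp hi.2⟩
          have heq : (fun s => L' (shipf ((shipR (ηα 2))ᵀ.mulVec (η s - ηα)) (ν s)
              ((shipR (ηα 2))ᵀ.mulVec (vc s)))) = fun s => shipf (η s) (ν s) (vc s) := by
            funext s
            show (shipR (ηα 2)).mulVec _ = _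
            rw [← shipR_key, shipR_mulVec_transpose_mulVec]
          rwa [heq] at this
        rw [intervalIntegral.integral_undef hint, intervalIntegral.integral_undef hint',
          Matrix.mulVec_zero]
    rw [h0, show η 0 + (∫ s in (0 : ℝ)..t, shipf (η s) (ν s) (vc s)) - ηα =
        (η 0 - ηα) + ∫ s in (0 : ℝ)..t, shipf (η s) (ν s) (vc s) by abel,
      Matrix.mulVec_add, hmain]
  · filter_upwards [hode] with t h
    have h1 : HasDerivAt (fun s => η s - ηα) (shipf (η t) (ν t) (vc t)) t := h.sub_const ηα
    have h2 := L.hasFDerivAt.comp_hasDerivAt t h1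
    have h3 : HasDerivAt (fun s => M.mulVec (η s - ηα))
        (M.mulVec (shipf (η t) (ν t) (vc t))) t := h2
    rwa [hM, shipR_key] at h3
end
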